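/- arXiv:2411.19347 — 2 statements merged into one kernel-verified Lean document; each statement's English description precedes it below -/
import Mathlib

section
/- Let (P, ≤, ', 0, 1) be a complemented orthogonal modular poset. Then for all a, b ∈ P: if a' ≤ b then b = a' ∨ (b ∧ a), and if a ≤ b then a = (b' ∨ a) ∧ b (the indicated meets and joins exist by orthogonality). -/
/-- Set of lower bounds of a subset of a poset. -/
def lbs {P : Type*} [PartialOrder P] (A : Set P) : Set P := {x | ∀ a ∈ A, x ≤ a}

/-- Set of upper bounds of a subset of a poset. -/
def ubs {P : Type*} [PartialOrder P] (A : Set P) : Set P := {x | ∀ a ∈ A, a ≤ x}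

/-- Set of maximal elements of a subset of a poset. -/
def maxE {P : Type*} [PartialOrder P] (A : Set P) : Set P :=
  {x | x ∈ A ∧ ∀ y ∈ A, x ≤ y → x = y}

/-- Set of minimal elements of a subset of a poset. -/
def minE {P : Type*} [PartialOrder P] (A : Set P) : Set P :=
  {x | x ∈ A ∧ ∀ y ∈ A, y ≤ x → x = y}

/-- A poset is saturated if every lower bound of a pair lies below a maximal lower
bound of that pair, and every upper bound of a pair lies above a minimal upper bound. -/
def Saturated (P : Type*) [PartialOrder P] : Prop :=
  (∀ a b x : P, x ∈ lbs {a, b} → ∃ m ∈ maxE (lbs {a, b}), x ≤ m) ∧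
  (∀ a b x : P, x ∈ ubs {a, b} → ∃ m ∈ minE (ubs {a, b}), m ≤ x)

/-- Orthogonality of a poset with a unary operation `c`:
if `a ≤ b` then `a ∨ b'` exists, and if `a' ≤ b` then `a ∧ b` exists. -/
def Orthogonal {P : Type*} [PartialOrder P] (c : P → P) : Prop :=
  (∀ a b : P, a ≤ b → ∃ j, IsLUB {a, c b} j) ∧
  (∀ a b : P, c a ≤ b → ∃ m, IsGLB {a, b} m)

/-- Generalized Sasaki operation `x ⊙ y = Min U(x, y') ∧ y` (set-valued). -/
def sOdot {P : Type*} [PartialOrder P] (c : P → P) (x y : P) : Set P :=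
  {w | ∃ u ∈ minE (ubs {x, c y}), IsGLB {u, y} w}

/-- Generalized Sasaki operation `x → y = x' ∨ Max L(x, y)` (set-valued). -/
def sImp {P : Type*} [PartialOrder P] (c : P → P) (x y : P) : Set P :=
  {w | ∃ l ∈ maxE (lbs {x, y}), IsLUB {c x, l} w}

/-- `A ≤₁ B`: every element of `A` lies below some element of `B`. -/
def le1 {P : Type*} [PartialOrder P] (A B : Set P) : Prop := ∀ a ∈ A, ∃ b ∈ B, a ≤ b

/-- `A ≤₂ B`: every element of `B` lies above some element of `A`. -/
def le2 {P : Type*} [PartialOrder P] (A B : Set P) : Prop := ∀ b ∈ B, ∃ a ∈ A, a ≤ b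

/-- Condition (A1): `x ⊙ y ≤₂ z` implies `x ≤₁ y → z`. -/
def CondA1 {P : Type*} [PartialOrder P] (c : P → P) : Prop :=
  ∀ x y z : P, le2 (sOdot c x y) {z} → le1 {x} (sImp c y z)

/-- Condition (A2): `x ≤₁ y → z` implies `x ⊙ y ≤₂ z`. -/
def CondA2 {P : Type*} [PartialOrder P] (c : P → P) : Prop :=
  ∀ x y z : P, le1 {x} (sImp c y z) → le2 (sOdot c x y) {z}

/-- The generalized Sasaki projection `p_a(x) = Min U(x, a') ∧ a` (set-valued). -/
def sProj {P : Type*} [PartialOrder P] (c : P → P) (a x : P) : Set P :=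
  {w | ∃ u ∈ minE (ubs {x, c a}), IsGLB {u, a} w}

/-- The generalized Sasaki projection extended to subsets. -/
def sProjSet {P : Type*} [PartialOrder P] (c : P → P) (a : P) (A : Set P) : Set P :=
  ⋃ x ∈ A, sProj c a x

/-- An orthomodular poset: a bounded poset with an antitone involution which is a
complementation, such that `x ≤ y'` implies `x ∨ y` exists, and `x ≤ y` implies
`y = x ∨ (y' ∨ x)'` (orthomodularity). -/
def OrthomodularPoset {P : Type*} [PartialOrder P] [BoundedOrder P] (c : P → P) : Prop :=
  (∀ x y : P, x ≤ y → c y ≤ c x) ∧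
  (∀ x : P, c (c x) = x) ∧
  (∀ x : P, IsLUB {x, c x} ⊤) ∧
  (∀ x : P, IsGLB {x, c x} ⊥) ∧
  (∀ x y : P, x ≤ c y → ∃ j, IsLUB {x, y} j) ∧
  (∀ x y : P, x ≤ y → ∀ j, IsLUB {c y, x} j → IsLUB {x, c j} y)

/-- `c` is a complementation: `x ∨ x' = 1` and `x ∧ x' = 0` for all `x`. -/
def Complementation {P : Type*} [PartialOrder P] [BoundedOrder P] (c : P → P) : Prop :=
  ∀ x : P, IsLUB {x, c x} ⊤ ∧ IsGLB {x, c x} ⊥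

/-- A poset is modular if `x ≤ z` implies `L(U(x,y), z) = L(U(x, L(y,z)))`. -/
def ModularPoset (P : Type*) [PartialOrder P] : Prop :=
  ∀ x y z : P, x ≤ z → lbs (ubs {x, y} ∪ {z}) = lbs (ubs (insert x (lbs {y, z})))

lemma mem_ubs_pair {P : Type*} [PartialOrder P] {u v y : P} :
    y ∈ ubs {u, v} ↔ u ≤ y ∧ v ≤ y := by simp [ubs]

lemma mem_lbs_pair {P : Type*} [PartialOrder P] {u v y : P} :
    y ∈ lbs {u, v} ↔ y ≤ u ∧ y ≤ v := by simp [lbs]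

/-- In a complemented orthogonal modular poset, `a' ≤ b` implies
`b = a' ∨ (b ∧ a)` and `a ≤ b` implies `a = (b' ∨ a) ∧ b`. -/
theorem stmt_17 {P : Type*} [PartialOrder P] [BoundedOrder P] (c : P → P)
    (hcomp : Complementation c) (horth : Orthogonal c) (hmod : ModularPoset P) :
    ∀ a b : P,
      (c a ≤ b → ∀ m, IsGLB {b, a} m → IsLUB {c a, m} b) ∧
      (a ≤ b → ∀ j, IsLUB {c b, a} j → IsGLB {j, b} a) := by
  intro a b
  constructor
  · intro hab m hm
    have hmb : m ≤ b := hm.1 (by simp)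
    have hma : m ≤ a := hm.1 (by simp)
    have heq := hmod (c a) a b hab
    have hbL : b ∈ lbs (ubs {c a, a} ∪ {b}) := by
      intro y hy
      rcases hy with hy | hy
      · rw [mem_ubs_pair] at hy
        have h1 : ⊤ ≤ y := (hcomp a).1.2 (mem_ubs_pair.mpr ⟨hy.2, hy.1⟩ : _)
        exact le_trans le_top h1
      · simp at hy; subst hy; exact le_rfl
    have hbR : b ∈ lbs (ubs (insert (c a) (lbs {a, b}))) := heq ▸ hbL
    constructor
    · rintro z hz
      rcases hz with h | h
      · exact h ▸ hab
      · simp only [Set.mem_singleton_iff] at h; exact h ▸ hmb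
    · intro u hu
      have hca : c a ≤ u := hu (by simp)
      have hmu : m ≤ u := hu (by simp)
      apply hbR
      intro y hy
      rcases hy with hy | hy
      · exact hy ▸ hca
      · rw [mem_lbs_pair] at hy
        have : y ≤ m := hm.2 (mem_lbs_pair.mpr ⟨hy.2, hy.1⟩ : _)
        exact le_trans this hmu
  · intro hab j hj
    have haj : a ≤ j := hj.1 (by simp)
    have heq := hmod a (c b) b hab
    have haR : a ∈ lbs (ubs (insert a (lbs {c b, b}))) := by
      intro u hu
      exact hu a (by simp)
    have haL : a ∈ lbs (ubs {a, c b} ∪ {b}) := heq ▸ haR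
    constructor
    · rintro z hz
      rcases hz with h | h
      · exact h ▸ haj
      · simp only [Set.mem_singleton_iff] at h; exact h ▸ hab
    · intro x hx
      have hxj : x ≤ j := hx (by simp)
      have hxb : x ≤ b := hx (by simp)
      have hxL : x ∈ lbs (ubs {a, c b} ∪ {b}) := by
        intro y hy
        rcases hy with hy | hy
        · rw [mem_ubs_pair] at hy
          have : j ≤ y := hj.2 (mem_ubs_pair.mpr ⟨hy.2, hy.1⟩ : _)
          exact le_trans hxj this
        · simp at hy; subst hy; exact hxb
      have hxR : x ∈ lbs (ubs (insert a (lbs {c b, b}))) := heq ▸ hxL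
      apply hxR
      intro y hy
      rcases hy with hy | hy
      · exact hy ▸ le_rfl
      · rw [mem_lbs_pair] at hy
        have : y ≤ ⊥ := (hcomp b).2.2 (mem_lbs_pair.mpr ⟨hy.2, hy.1⟩ : _)
        exact le_trans this bot_le
end

section
/- In every saturated complemented orthogonal modular poset (P, ≤, ', 0, 1) the generalized Sasaki operations form an adjoint pair, i.e. both conditions (A1) and (A2) hold. -/
lemma mem_ub_pair' {P : Type*} [PartialOrder P] {a b t : P} (h1 : a ≤ t) (h2 : b ≤ t) :
    t ∈ upperBounds ({a, b} : Set P) := by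
  intro s hs
  rcases hs with h | h
  · rw [h]; exact h1
  · rw [Set.mem_singleton_iff] at h; rw [h]; exact h2

lemma mem_lb_pair' {P : Type*} [PartialOrder P] {a b t : P} (h1 : t ≤ a) (h2 : t ≤ b) :
    t ∈ lowerBounds ({a, b} : Set P) := by
  intro s hs
  rcases hs with h | h
  · rw [h]; exact h1
  · rw [Set.mem_singleton_iff] at h; rw [h]; exact h2

lemma mem_lbs_pair' {P : Type*} [PartialOrder P] {a b t : P} (h1 : t ≤ a) (h2 : t ≤ b) :
    t ∈ lbs ({a, b} : Set P) := by
  intro s hs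
  rcases hs with h | h
  · rw [h]; exact h1
  · rw [Set.mem_singleton_iff] at h; rw [h]; exact h2

lemma mem_ubs_pair' {P : Type*} [PartialOrder P] {a b t : P} (h1 : a ≤ t) (h2 : b ≤ t) :
    t ∈ ubs ({a, b} : Set P) := by
  intro s hs
  rcases hs with h | h
  · rw [h]; exact h1
  · rw [Set.mem_singleton_iff] at h; rw [h]; exact h2

/-- In every saturated complemented orthogonal modular poset the
generalized Sasaki operations form an adjoint pair, i.e. (A1) and (A2) hold. -/
theorem stmt_18 {P : Type*} [PartialOrder P] [BoundedOrder P] (c : P → P)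
    (hsat : Saturated P) (hcomp : Complementation c) (horth : Orthogonal c)
    (hmod : ModularPoset P) :
    CondA1 c ∧ CondA2 c := by
  obtain ⟨hsatL, hsatU⟩ := hsat
  obtain ⟨horth1, horth2⟩ := horth
  constructor
  · -- (A1)
    intro x y z h
    obtain ⟨w, ⟨u, ⟨huU, humin⟩, hglb⟩, hwz⟩ := h z rfl
    have hxu : x ≤ u := huU x (by simp)
    have hyu : c y ≤ u := huU (c y) (by simp)
    have hwy : w ≤ y := hglb.1 (by simp)
    have hwu : w ≤ u := hglb.1 (by simp)
    obtain ⟨l, hlmax, hwl⟩ := hsatL y z w (mem_lbs_pair' hwy hwz)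
    have hly : l ≤ y := hlmax.1 y (by simp)
    obtain ⟨j, hj⟩ := horth1 l y hly
    have hj' : IsLUB {c y, l} j := by rw [Set.pair_comm]; exact hj
    have hlj : l ≤ j := hj.1 (by simp)
    have hcyj : c y ≤ j := hj.1 (by simp)
    intro a ha
    rw [Set.mem_singleton_iff] at ha
    rw [ha]
    refine ⟨j, ⟨l, hlmax, hj'⟩, ?_⟩
    -- show x ≤ j using modularity
    have hmodeq := hmod (c y) y u hyu
    have humem : u ∈ lbs (ubs {c y, y} ∪ {u}) := by
      intro t ht
      rcases ht with ht | ht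
      · have h2 : t ∈ upperBounds {y, c y} :=
          mem_ub_pair' (ht y (by simp)) (ht (c y) (by simp))
        exact le_trans le_top ((hcomp y).1.2 h2)
      · rw [Set.mem_singleton_iff] at ht; rw [ht]
    rw [hmodeq] at humem
    have hjmem : j ∈ ubs (insert (c y) (lbs {y, u})) := by
      intro t ht
      rcases ht with ht | ht
      · rw [ht]; exact hcyj
      · have htl : t ∈ lowerBounds {u, y} :=
          mem_lb_pair' (ht u (by simp)) (ht y (by simp))
        exact le_trans (le_trans (hglb.2 htl) hwl) hlj
    exact le_trans hxu (humem j hjmem)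
  · -- (A2)
    intro x y z h
    obtain ⟨j, ⟨l, hlmax, hjlub⟩, hxj⟩ := h x rfl
    have hly : l ≤ y := hlmax.1 y (by simp)
    have hlz : l ≤ z := hlmax.1 z (by simp)
    have hcyj : c y ≤ j := hjlub.1 (by simp)
    have hlj : l ≤ j := hjlub.1 (by simp)
    obtain ⟨u, ⟨huU, humin⟩, huj⟩ := hsatU x (c y) j (mem_ubs_pair' hxj hcyj)
    have hcyu : c y ≤ u := huU (c y) (by simp)
    obtain ⟨w, hw⟩ := horth2 y u hcyu
    have hglb : IsGLB {u, y} w := by rw [Set.pair_comm]; exact hw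
    have hwu : w ≤ u := hglb.1 (by simp)
    have hwy : w ≤ y := hglb.1 (by simp)
    intro b hb
    rw [Set.mem_singleton_iff] at hb
    rw [hb]
    refine ⟨w, ⟨u, ⟨huU, humin⟩, hglb⟩, ?_⟩
    -- show w ≤ z using modularity
    have hmodeq := hmod l (c y) y hly
    have hwmem : w ∈ lbs (ubs {l, c y} ∪ {y}) := by
      intro t ht
      rcases ht with ht | ht
      · have h2 : t ∈ upperBounds {c y, l} :=
          mem_ub_pair' (ht (c y) (by simp)) (ht l (by simp))
        exact le_trans (le_trans hwu huj) (hjlub.2 h2)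
      · rw [Set.mem_singleton_iff] at ht; rw [ht]; exact hwy
    rw [hmodeq] at hwmem
    have hlmem : l ∈ ubs (insert l (lbs {c y, y})) := by
      intro t ht
      rcases ht with ht | ht
      · rw [ht]
      · have h2 : t ∈ lowerBounds {y, c y} :=
          mem_lb_pair' (ht y (by simp)) (ht (c y) (by simp))
        exact le_trans ((hcomp y).2.2 h2) bot_le
    exact le_trans (hwmem l hlmem) hlz
end
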